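/- With G1, G2 defined piecewise by parity of the second argument as: G1(a,b) = sqrt(a(a+b+1)(p-a)/(a+b)) for b even, G1(a,b) = -sqrt(a(p-a)) for b odd, G2(a,b) = sqrt(a+b+1) for b even, G2(a,b) = -sqrt((b+1)(p+b+1)/(a+b)) for b odd, and p ≥ a, for all positive integers a, b we have G1(a-1,b)²/(a+b) + G2(a,b-1)² + G2(a,b)² = p + 2b + 2. -/

import Mathlib

/-- Reduced matrix element `G1` for the `osp(3|2)` parastatistics Fock space of order `p`. -/
noncomputable def G1 (p : ℝ) (a b : ℕ) : ℝ :=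
  if Even b then Real.sqrt ((a : ℝ) * ((a : ℝ) + b + 1) * (p - a) / ((a : ℝ) + b))
  else -Real.sqrt ((a : ℝ) * (p - a))

/-- Reduced matrix element `G2` for the `osp(3|2)` parastatistics Fock space of order `p`. -/
noncomputable def G2 (p : ℝ) (a b : ℕ) : ℝ :=
  if Even b then Real.sqrt ((a : ℝ) + b + 1)
  else -Real.sqrt (((b : ℝ) + 1) * (p + b + 1) / ((a : ℝ) + b))

/-!
Squaring removes the signs and the square roots, so the identity becomes a rational one. In
both parities of `b` the two fractions share a denominator, `a + b - 1` resp. `a + b`, and their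
numerators add up to that denominator times `p - a + b + 1` resp. `p - a + b + 2`.
-/

section Squares

variable {p : ℝ} {a b : ℕ}

theorem G1_sq_of_even (hb : Even b) (hap : (a : ℝ) ≤ p) :
    G1 p a b ^ 2 = a * (a + b + 1) * (p - a) / (a + b) := by
  rw [G1, if_pos hb, Real.sq_sqrt (by have := sub_nonneg.2 hap; positivity)]

theorem G1_sq_of_odd (hb : Odd b) (hap : (a : ℝ) ≤ p) : G1 p a b ^ 2 = a * (p - a) := by
  rw [G1, if_neg (Nat.not_even_iff_odd.2 hb), neg_sq,
    Real.sq_sqrt (by have := sub_nonneg.2 hap; positivity)]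

theorem G2_sq_of_even (hb : Even b) : G2 p a b ^ 2 = a + b + 1 := by
  rw [G2, if_pos hb, Real.sq_sqrt (by positivity)]

theorem G2_sq_of_odd (hb : Odd b) (hp : 0 ≤ p + b + 1) :
    G2 p a b ^ 2 = (b + 1) * (p + b + 1) / (a + b) := by
  rw [G2, if_neg (Nat.not_even_iff_odd.2 hb), neg_sq, Real.sq_sqrt (by positivity)]

end Squares

theorem stmt2 (p : ℝ) : ∀ a b : ℕ, 0 < a → 0 < b → (a : ℝ) ≤ p →
    G1 p (a - 1) b ^ 2 / ((a : ℝ) + b)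
      + G2 p a (b - 1) ^ 2 + G2 p a b ^ 2 = p + 2 * b + 2 := by
  intro a b ha hb hap
  obtain ⟨a, rfl⟩ := Nat.exists_eq_add_one_of_ne_zero ha.ne'
  obtain ⟨b, rfl⟩ := Nat.exists_eq_add_one_of_ne_zero hb.ne'
  simp only [Nat.add_sub_cancel]
  push_cast at hap ⊢
  have hap' : (a : ℝ) ≤ p := by linarith
  have hp : 0 ≤ p := by linarith [a.cast_nonneg (α := ℝ)]
  rcases Nat.even_or_odd b with hb | hb
  · rw [G1_sq_of_odd hb.add_one hap', G2_sq_of_odd hb.add_one (by positivity),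
      G2_sq_of_even hb]
    push_cast
    field_simp
    ring
  · rw [G1_sq_of_even hb.add_one hap', G2_sq_of_odd hb (by positivity), G2_sq_of_even hb.add_one]
    push_cast
    field_simp
    ring
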